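/- arXiv:2412.11528 — 4 statements merged into one kernel-verified Lean document; each statement's English description precedes it below -/
import Mathlib

section
/- For every n ≥ 2, w(n,0) = w(n-2,0) + n - 1, where w(n,0) is the number of compositions of n with all parts in {1,2} and zero water cells. -/
/-- A composition of `n`: a list of positive integers summing to `n`. -/
def IsComposition (n : ℕ) (l : List ℕ) : Prop :=
  (∀ x ∈ l, 0 < x) ∧ l.sum = n

/-- All parts of the list lie in {1, 2}. -/
def Parts12 (l : List ℕ) : Prop := ∀ x ∈ l, x = 1 ∨ x = 2

/-- Number of water cells: parts equal to 1 with a part 2 strictly before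
and a part 2 strictly after. -/
noncomputable def waterCells (l : List ℕ) : ℕ :=
  {i : Fin l.length | l.get i = 1 ∧ (∃ j : Fin l.length, j < i ∧ l.get j = 2) ∧
    (∃ j : Fin l.length, i < j ∧ l.get j = 2)}.ncard

/-- `w n k`: number of compositions of `n` with parts in {1,2} and exactly `k` water cells. -/
noncomputable def w (n k : ℕ) : ℕ :=
  {l : List ℕ | Parts12 l ∧ l.sum = n ∧ waterCells l = k}.ncard

/-- Diagonal sums of the water-cell array. -/
noncomputable def d (n : ℕ) : ℕ := ∑ k ∈ Finset.range (n + 1), w (n - k) k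

/-- All internal parts (other than the first and last) are even. -/
def InternalEven (l : List ℕ) : Prop := ∀ x ∈ (l.drop 1).dropLast, Even x


/-
A composition into parts 1 and 2 has no water cell exactly when it has no subsequence `2, 1, 2`,
that is, when it is a plateau `1^a 2^b 1^c`. The all-ones composition is the only plateau with
`b = 0`; the others are determined by `(a, b)` with `b ≥ 1` and `a + 2b ≤ n`, so `w(n,0) - 1`
counts these pairs. For `n + 2` the pairs with `b = 1` contribute `n + 1`, and those with `b ≥ 2`
correspond to the pairs for `n` by lowering `b`, which gives the recurrence.
-/
open List

namespace List

variable {α : Type*} {x y : α} {l : List α}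

theorem exists_eq_replicate_append_replicate (hl : ∀ z ∈ l, z = x ∨ z = y)
    (h : ¬ [x, y] <+ l) : ∃ b c, l = replicate b y ++ replicate c x := by
  induction l with
  | nil => exact ⟨0, 0, rfl⟩
  | cons z t ih =>
    rcases hl z mem_cons_self with rfl | rfl
    · have ht : ∀ u ∈ t, u = z := fun u hu =>
        (hl u (mem_cons_of_mem _ hu)).resolve_right fun hy =>
          h (Sublist.cons_cons z (singleton_sublist.mpr (hy ▸ hu)))
      refine ⟨0, t.length + 1, ?_⟩
      rw [eq_replicate_of_mem ht]
      simp [replicate_succ]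
    · obtain ⟨b, c, rfl⟩ :=
        ih (fun u hu => hl u (mem_cons_of_mem _ hu)) (fun h' => h (h'.cons _))
      exact ⟨b + 1, c, by simp [replicate_succ]⟩

theorem exists_eq_replicate_append_replicate_append_replicate (hl : ∀ z ∈ l, z = x ∨ z = y)
    (h : ¬ [y, x, y] <+ l) : ∃ a b c, l = replicate a x ++ replicate b y ++ replicate c x := by
  induction l with
  | nil => exact ⟨0, 0, 0, rfl⟩
  | cons z t ih =>
    have ht : ∀ u ∈ t, u = x ∨ u = y := fun u hu => hl u (mem_cons_of_mem _ hu)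
    rcases hl z mem_cons_self with rfl | rfl
    · obtain ⟨a, b, c, rfl⟩ := ih ht (fun h' => h (h'.cons _))
      exact ⟨a + 1, b, c, by simp [replicate_succ]⟩
    · obtain ⟨b, c, rfl⟩ :=
        exists_eq_replicate_append_replicate ht (fun h' => h (h'.cons_cons _))
      exact ⟨0, b + 1, c, by simp [replicate_succ]⟩

end List

def plateau (a b c : ℕ) : List ℕ := replicate a 1 ++ replicate b 2 ++ replicate c 1

section Plateau

variable (a b c : ℕ)

theorem sum_plateau : (plateau a b c).sum = a + 2 * b + c := by
  simp [plateau]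
  ring

theorem count_two_plateau : (plateau a b c).count 2 = b := by
  simp [plateau, count_replicate]

theorem idxOf_two_plateau {b : ℕ} (hb : 0 < b) : (plateau a b c).idxOf 2 = a := by
  obtain ⟨b, rfl⟩ := Nat.exists_eq_add_of_lt hb
  rw [plateau, append_assoc, idxOf_append_of_notMem (by simp)]
  simp [replicate_succ]

theorem parts12_plateau : Parts12 (plateau a b c) := by
  intro x hx
  simp only [plateau, mem_append, mem_replicate] at hx
  omega

theorem getElem_plateau {i : ℕ} (hi : i < (plateau a b c).length) :
    (plateau a b c)[i] = if a ≤ i ∧ i < a + b then 2 else 1 := by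
  simp only [plateau, getElem_append, getElem_replicate, length_append, length_replicate]
  split_ifs <;> omega

theorem waterCells_plateau : waterCells (plateau a b c) = 0 := by
  rw [waterCells, Set.ncard_eq_zero (Set.toFinite _), Set.eq_empty_iff_forall_notMem]
  rintro ⟨i, hi⟩ ⟨h1, ⟨⟨j, hj⟩, hji, h2⟩, ⟨⟨k, hk⟩, hik, h2'⟩⟩
  simp only [get_eq_getElem, getElem_plateau, Fin.mk_lt_mk] at h1 h2 h2' hji hik
  split_ifs at h1 h2 h2' <;> omega

end Plateau

theorem waterCells_ne_zero_of_sublist {l : List ℕ} (h : [2, 1, 2] <+ l) : waterCells l ≠ 0 := by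
  obtain ⟨f, hf⟩ := sublist_iff_exists_fin_orderEmbedding_get_eq.mp h
  have hget (i : Fin 3) : l.get (f i) = [2, 1, 2].get i := (hf i).symm
  refine Set.ncard_ne_zero_of_mem (a := f 1) ⟨hget 1, ⟨f 0, f.strictMono (by decide), hget 0⟩,
    ⟨f 2, f.strictMono (by decide), hget 2⟩⟩ (Set.toFinite _)

theorem parts12_and_waterCells_eq_zero_iff {l : List ℕ} :
    Parts12 l ∧ waterCells l = 0 ↔ ∃ a b c, l = plateau a b c := by
  constructor
  · rintro ⟨hl, hw⟩
    exact exists_eq_replicate_append_replicate_append_replicate hl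
      fun h => waterCells_ne_zero_of_sublist h hw
  · rintro ⟨a, b, c, rfl⟩
    exact ⟨parts12_plateau a b c, waterCells_plateau a b c⟩

def plateauShapes (n : ℕ) : Finset (ℕ × ℕ) :=
  (Finset.range (n + 1) ×ˢ Finset.Icc 1 n).filter fun s => s.1 + 2 * s.2 ≤ n

theorem mem_plateauShapes {n : ℕ} {s : ℕ × ℕ} :
    s ∈ plateauShapes n ↔ s.1 + 2 * s.2 ≤ n ∧ 1 ≤ s.2 := by
  simp only [plateauShapes, Finset.mem_filter, Finset.mem_product, Finset.mem_range,
    Finset.mem_Icc]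
  omega

theorem plateauShapes_add_two (n : ℕ) :
    plateauShapes (n + 2) = (Finset.range (n + 1)).image (·, 1) ∪
      (plateauShapes n).image fun s => (s.1, s.2 + 1) := by
  ext ⟨a, b⟩
  simp only [Finset.mem_union, Finset.mem_image, mem_plateauShapes, Finset.mem_range,
    Prod.mk.injEq, Prod.exists]
  constructor
  · intro h
    rcases (by omega : b = 1 ∨ 2 ≤ b) with rfl | hb
    · exact Or.inl ⟨a, by omega, rfl, rfl⟩
    · exact Or.inr ⟨a, b - 1, by omega, rfl, by omega⟩
  · rintro (⟨a, ha, rfl, rfl⟩ | ⟨a, b, hab, rfl, rfl⟩) <;> omega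

theorem card_plateauShapes_add_two (n : ℕ) :
    (plateauShapes (n + 2)).card = (plateauShapes n).card + (n + 1) := by
  rw [plateauShapes_add_two, Finset.card_union_of_disjoint, Finset.card_image_of_injective,
    Finset.card_image_of_injective, Finset.card_range, add_comm]
  · rintro ⟨a, b⟩ ⟨a', b'⟩ h
    simpa using h
  · intro a a' h
    simpa using h
  · simp only [Finset.disjoint_left, Finset.mem_image, mem_plateauShapes, Prod.exists]
    rintro _ ⟨a, -, rfl⟩ ⟨a', b', ⟨-, hb'⟩, h⟩
    simp only [Prod.mk.injEq] at h
    omega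

theorem setOf_waterCells_eq_zero (n : ℕ) :
    {l : List ℕ | Parts12 l ∧ l.sum = n ∧ waterCells l = 0} =
      insert (replicate n 1)
        ((fun s : ℕ × ℕ => plateau s.1 s.2 (n - s.1 - 2 * s.2)) '' plateauShapes n) := by
  have h_ones : replicate n 1 = plateau 0 0 n := by simp [plateau]
  ext l
  simp only [Set.mem_ofPred_eq, Set.mem_insert_iff, Set.mem_image, Finset.mem_coe,
    mem_plateauShapes, Prod.exists]
  constructor
  · rintro ⟨hl, hsum, hw⟩
    obtain ⟨a, b, c, rfl⟩ := parts12_and_waterCells_eq_zero_iff.mp ⟨hl, hw⟩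
    rw [sum_plateau] at hsum
    rcases Nat.eq_zero_or_pos b with rfl | hb
    · left
      rw [← hsum, mul_zero, add_zero]
      simp [plateau]
    · right
      exact ⟨a, b, ⟨by omega, hb⟩, by congr 1; omega⟩
  · rintro (rfl | ⟨a, b, hab, rfl⟩)
    · exact ⟨h_ones ▸ parts12_plateau 0 0 n, by simp, h_ones ▸ waterCells_plateau 0 0 n⟩
    · exact ⟨parts12_plateau _ _ _, by rw [sum_plateau]; omega, waterCells_plateau _ _ _⟩

theorem w_zero_eq_card_plateauShapes_add_one (n : ℕ) : w n 0 = (plateauShapes n).card + 1 := by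
  rw [w, setOf_waterCells_eq_zero, Set.ncard_insert_of_notMem, Set.InjOn.ncard_image,
    Set.ncard_coe_finset]
  · rintro ⟨a, b⟩ hs ⟨a', b'⟩ hs' h
    have hb := (mem_plateauShapes.mp hs).2
    have hb' := (mem_plateauShapes.mp hs').2
    have h_count := congrArg (count 2) h
    have h_idx := congrArg (idxOf 2) h
    simp only [count_two_plateau, idxOf_two_plateau _ _ hb, idxOf_two_plateau _ _ hb']
      at h_count h_idx
    rw [h_count, h_idx]
  · rintro ⟨s, hs, h⟩
    have h_count := congrArg (count 2) h
    rw [count_two_plateau, count_replicate, if_neg (by decide)] at h_count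
    exact absurd h_count (Nat.one_le_iff_ne_zero.mp (mem_plateauShapes.mp hs).2)

theorem stmt4 (n : ℕ) (hn : 2 ≤ n) :
    w n 0 = w (n - 2) 0 + n - 1 := by
  obtain ⟨m, rfl⟩ := Nat.exists_eq_add_of_le' hn
  rw [w_zero_eq_card_plateauShapes_add_one, Nat.add_sub_cancel,
    w_zero_eq_card_plateauShapes_add_one, card_plateauShapes_add_two]
  omega
end

section
/- For every k ≥ 2 and n ≥ 6, w(n,k) = w(n-1, k-1) + w(n-2, k), where w(n,k) counts compositions of n with parts in {1,2} having exactly k water cells. -/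
/-! Write a composition with at least one water cell as `P ++ 2 :: M ++ 2 :: S`, where the two
displayed 2s are its first and last 2; its water cells are then exactly the 1s of `M`. Deleting the
head of `M` (the part right after the first 2) lowers the sum by that part, and the number of water
cells by one if the part is a 1 and not at all if it is a 2. As long as the shorter composition
still has a water cell (k ≥ 2), inserting a part after its first 2 inverts this deletion. -/

namespace List

variable {α : Type*} {a v v' : α} {l l' : List α}

theorem exists_lt_getElem?_eq_some_iff {P T : List α} (hP : a ∉ P) {i : ℕ} :
    (∃ j < i, (P ++ a :: T)[j]? = some a) ↔ P.length < i := by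
  constructor
  · rintro ⟨j, hji, hj⟩
    by_contra! hiP
    rw [getElem?_append_left (by omega)] at hj
    exact hP (mem_of_getElem? hj)
  · intro h
    exact ⟨P.length, h, by simp⟩

theorem exists_gt_getElem?_eq_some_iff {T S : List α} (hS : a ∉ S) {i : ℕ} :
    (∃ j, i < j ∧ (T ++ a :: S)[j]? = some a) ↔ i < T.length := by
  constructor
  · rintro ⟨j, hij, hj⟩
    by_contra! hTi
    rw [getElem?_append_right (by omega), getElem?_cons] at hj
    split_ifs at hj
    · omega
    · exact hS (mem_of_getElem? hj)
  · intro h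
    exact ⟨T.length, h, by simp⟩

variable [DecidableEq α]

theorem ncard_getElem?_eq_some (l : List α) (a : α) :
    {i : ℕ | l[i]? = some a}.ncard = l.count a := by
  have : {i : ℕ | l[i]? = some a} = Fin.val '' {i : Fin l.length | l.get i = a} := by
    ext i
    simp only [Set.mem_image, Set.mem_ofPred_eq, get_eq_getElem, getElem?_eq_some_iff]
    exact ⟨fun ⟨hi, h⟩ => ⟨⟨i, hi⟩, h, rfl⟩, by rintro ⟨i, h, rfl⟩; exact ⟨i.2, h⟩⟩
  rw [this, Set.ncard_image_of_injective _ Fin.val_injective, Set.ncard_eq_toFinset_card',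
    Set.toFinset_ofPred]
  exact Fin.card_filter_univ_eq_vector_get_eq_count a ⟨l, rfl⟩

theorem exists_eq_append_cons_append_cons (h : 2 ≤ l.count a) :
    ∃ P M S, l = P ++ a :: M ++ a :: S ∧ a ∉ P ∧ a ∉ S := by
  obtain ⟨P, T, rfl, hP⟩ := eq_append_cons_of_mem (count_pos_iff.mp (by omega : 0 < l.count a))
  have hT : a ∈ T.reverse := by
    rw [count_append, count_cons_self, count_eq_zero.mpr hP] at h
    exact mem_reverse.mpr (count_pos_iff.mp (by omega))
  obtain ⟨S', M', hT', hS'⟩ := eq_append_cons_of_mem hT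
  refine ⟨P, M'.reverse, S'.reverse, ?_, hP, by simpa using hS'⟩
  rw [← reverse_reverse T, hT']
  simp

def insertAfterFirst (a v : α) : List α → List α
  | [] => [v]
  | x :: t => if x = a then x :: v :: t else x :: insertAfterFirst a v t

theorem insertAfterFirst_append_cons {P : List α} (hP : a ∉ P) (T : List α) :
    insertAfterFirst a v (P ++ a :: T) = P ++ a :: v :: T := by
  induction P with
  | nil => simp [insertAfterFirst]
  | cons x P ih =>
    rw [mem_cons, not_or] at hP
    simp [insertAfterFirst, Ne.symm hP.1, ih hP.2]

theorem perm_insertAfterFirst (a v : α) (l : List α) : insertAfterFirst a v l ~ v :: l := by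
  induction l with
  | nil => rfl
  | cons x t ih =>
    unfold insertAfterFirst
    split_ifs
    · exact Perm.swap v x t
    · exact (ih.cons x).trans (Perm.swap v x t)

theorem insertAfterFirst_inj (hl : a ∈ l) :
    insertAfterFirst a v l = insertAfterFirst a v' l' ↔ v = v' ∧ l = l' := by
  induction l generalizing l' with
  | nil => simp at hl
  | cons x t ih =>
    cases l' with
    | nil =>
      refine ⟨fun h => ?_, fun h => absurd h.2 (cons_ne_nil x t)⟩
      have hlen := (perm_insertAfterFirst a v (x :: t)).length_eq
      rw [h] at hlen
      simp [insertAfterFirst] at hlen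
    | cons y s =>
      simp only [insertAfterFirst]
      split_ifs with hx hy hy
      · simp [hx, hy]
      · simp [hx, Ne.symm hy]
      · simp [hx, hy]
      · have ht : a ∈ t := by simpa [Ne.symm hx] using hl
        simp only [cons.injEq, ih ht]
        tauto

theorem sum_insertAfterFirst {M : Type*} [AddCommMonoid M] [DecidableEq M] (a v : M)
    (l : List M) : (insertAfterFirst a v l).sum = v + l.sum :=
  (perm_insertAfterFirst a v l).sum_eq

end List

open List

lemma parts12_insertAfterFirst {a v : ℕ} {l : List ℕ} :
    Parts12 (insertAfterFirst a v l) ↔ (v = 1 ∨ v = 2) ∧ Parts12 l := by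
  simp [Parts12, (perm_insertAfterFirst a v l).mem_iff]

lemma waterCells_eq_ncard (l : List ℕ) :
    waterCells l = {i : ℕ | l[i]? = some 1 ∧ (∃ j < i, l[j]? = some 2) ∧
      ∃ j, i < j ∧ l[j]? = some 2}.ncard := by
  rw [waterCells, ← Set.ncard_image_of_injective _ Fin.val_injective]
  congr 1
  ext i
  simp only [Set.mem_image, Set.mem_ofPred_eq, get_eq_getElem, getElem?_eq_some_iff]
  constructor
  · rintro ⟨i, ⟨h1, ⟨j, hj, h2⟩, j', hj', h2'⟩, rfl⟩
    exact ⟨⟨i.2, h1⟩, ⟨j, hj, j.2, h2⟩, j', hj', j'.2, h2'⟩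
  · rintro ⟨⟨hi, h1⟩, ⟨j, hj, hjl, h2⟩, j', hj', hjl', h2'⟩
    exact ⟨⟨i, hi⟩, ⟨h1, ⟨⟨j, hjl⟩, hj, h2⟩, ⟨j', hjl'⟩, hj', h2'⟩, rfl⟩

lemma two_le_count_two_of_waterCells_pos {l : List ℕ} (h : 0 < waterCells l) :
    2 ≤ l.count 2 := by
  rw [waterCells_eq_ncard] at h
  obtain ⟨i, -, ⟨j, hji, hj⟩, j', hij', hj'⟩ := Set.nonempty_of_ncard_ne_zero h.ne'
  have mem_take : 2 ∈ l.take j' :=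
    mem_iff_getElem?.mpr ⟨j, by rw [getElem?_take_of_lt (by omega), hj]⟩
  have mem_drop : 2 ∈ l.drop j' :=
    mem_iff_getElem?.mpr ⟨0, by rw [getElem?_drop, add_zero, hj']⟩
  rw [← take_append_drop j' l, count_append]
  have := count_pos_iff.mpr mem_take
  have := count_pos_iff.mpr mem_drop
  omega

lemma waterCells_append_cons_append_cons {P M S : List ℕ} (hP : 2 ∉ P) (hS : 2 ∉ S) :
    waterCells (P ++ 2 :: M ++ 2 :: S) = M.count 1 := by
  have getElem?_middle (j : ℕ) (hj : j < M.length) :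
      (P ++ 2 :: M ++ 2 :: S)[P.length + 1 + j]? = M[j]? := by
    rw [getElem?_append_left (by simp; omega), getElem?_append_right (by omega)]
    simp [show P.length + 1 + j - P.length = j + 1 by omega]
  have after_first_two (i : ℕ) := exists_lt_getElem?_eq_some_iff (T := M ++ 2 :: S) (i := i) hP
  have before_last_two (i : ℕ) := exists_gt_getElem?_eq_some_iff (T := P ++ 2 :: M) (i := i) hS
  simp only [append_assoc, cons_append] at after_first_two before_last_two getElem?_middle ⊢
  rw [waterCells_eq_ncard, ← ncard_getElem?_eq_some,
    ← Set.ncard_image_of_injective {j | M[j]? = some 1} (add_right_injective (P.length + 1))]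
  congr 1
  ext i
  simp only [Set.mem_ofPred_eq, Set.mem_image, after_first_two, before_last_two, length_append,
    length_cons]
  constructor
  · rintro ⟨hi, hPi, hiM⟩
    refine ⟨i - (P.length + 1), ?_, by omega⟩
    rwa [← getElem?_middle _ (by omega), show P.length + 1 + (i - (P.length + 1)) = i by omega]
  · rintro ⟨j, hj, rfl⟩
    have hjM : j < M.length := (List.getElem?_eq_some_iff.mp hj).1
    exact ⟨(getElem?_middle j hjM).trans hj, by omega, by omega⟩

lemma waterCells_insertAfterFirst_two {l : List ℕ} (hl : 2 ≤ l.count 2) (v : ℕ) :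
    waterCells (insertAfterFirst 2 v l) = waterCells l + if v = 1 then 1 else 0 := by
  obtain ⟨P, M, S, rfl, hP, hS⟩ := exists_eq_append_cons_append_cons hl
  have hinsert : insertAfterFirst 2 v (P ++ 2 :: M ++ 2 :: S) = P ++ 2 :: (v :: M) ++ 2 :: S := by
    simp [insertAfterFirst_append_cons hP]
  rw [hinsert, waterCells_append_cons_append_cons hP hS, waterCells_append_cons_append_cons hP hS,
    count_cons]
  simp

lemma exists_eq_insertAfterFirst_two {l : List ℕ} (hl : 0 < waterCells l) :
    ∃ v l', l = insertAfterFirst 2 v l' ∧ 2 ≤ l'.count 2 := by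
  obtain ⟨P, M, S, rfl, hP, hS⟩ :=
    exists_eq_append_cons_append_cons (two_le_count_two_of_waterCells_pos hl)
  rw [waterCells_append_cons_append_cons hP hS] at hl
  obtain ⟨v, M, rfl⟩ :=
    exists_cons_of_ne_nil (ne_nil_of_length_pos (hl.trans_le (count_le_length ..)))
  refine ⟨v, P ++ 2 :: M ++ 2 :: S, by simp [insertAfterFirst_append_cons hP], ?_⟩
  simp only [count_append, count_cons_self]
  omega

def waterCompositions (n k : ℕ) : Set (List ℕ) :=
  {l | Parts12 l ∧ l.sum = n ∧ waterCells l = k}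

lemma w_eq_ncard_waterCompositions (n k : ℕ) : w n k = (waterCompositions n k).ncard := rfl

lemma finite_waterCompositions (n k : ℕ) : (waterCompositions n k).Finite := by
  refine (Set.finite_range (Composition.blocks (n := n))).subset ?_
  rintro l ⟨hl, rfl, -⟩
  exact ⟨⟨l, fun hi => by rcases hl _ hi with rfl | rfl <;> norm_num, rfl⟩, rfl⟩

lemma waterCompositions_add_two_add_one {n k : ℕ} (hk : 0 < k) :
    waterCompositions (n + 2) (k + 1) =
      insertAfterFirst 2 1 '' waterCompositions (n + 1) k ∪
        insertAfterFirst 2 2 '' waterCompositions n (k + 1) := by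
  ext l
  constructor
  · rintro ⟨hparts, hsum, hwater⟩
    obtain ⟨v, l, rfl, hl⟩ := exists_eq_insertAfterFirst_two (l := l) (by omega)
    rw [parts12_insertAfterFirst] at hparts
    rw [sum_insertAfterFirst] at hsum
    rw [waterCells_insertAfterFirst_two hl] at hwater
    obtain ⟨rfl | rfl, hparts⟩ := hparts
    · exact Or.inl ⟨l, ⟨hparts, by omega, by simpa using hwater⟩, rfl⟩
    · exact Or.inr ⟨l, ⟨hparts, by omega, by simpa using hwater⟩, rfl⟩
  · rintro (⟨l, ⟨hparts, hsum, hwater⟩, rfl⟩ | ⟨l, ⟨hparts, hsum, hwater⟩, rfl⟩) <;>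
      refine ⟨parts12_insertAfterFirst.mpr ⟨by norm_num, hparts⟩, ?_, ?_⟩ <;>
      simp [sum_insertAfterFirst, hsum, waterCells_insertAfterFirst_two
        (two_le_count_two_of_waterCells_pos (l := l) (by omega)), hwater] <;>
      omega

lemma w_add_two_add_one {n k : ℕ} (hk : 0 < k) :
    w (n + 2) (k + 1) = w (n + 1) k + w n (k + 1) := by
  have two_mem {m j : ℕ} (hj : 0 < j) {l : List ℕ} (hl : l ∈ waterCompositions m j) : 2 ∈ l :=
    count_pos_iff.mp (Nat.zero_lt_two.trans_le (two_le_count_two_of_waterCells_pos (hl.2.2 ▸ hj)))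
  have inj_on {m j : ℕ} (hj : 0 < j) (v : ℕ) :
      Set.InjOn (insertAfterFirst 2 v) (waterCompositions m j) :=
    fun l hl l' _ h => ((insertAfterFirst_inj (two_mem hj hl)).mp h).2
  have disjoint : _root_.Disjoint (insertAfterFirst 2 1 '' waterCompositions (n + 1) k)
      (insertAfterFirst 2 2 '' waterCompositions n (k + 1)) := by
    rw [Set.disjoint_left]
    rintro _ ⟨l, -, rfl⟩ ⟨l', hl', h⟩
    exact absurd ((insertAfterFirst_inj (two_mem k.succ_pos hl')).mp h).1 (by norm_num)
  simp only [w_eq_ncard_waterCompositions]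
  rw [waterCompositions_add_two_add_one hk, Set.ncard_union_eq disjoint
    ((finite_waterCompositions _ _).image _) ((finite_waterCompositions _ _).image _),
    (inj_on hk 1).ncard_image, (inj_on k.succ_pos 2).ncard_image]

theorem stmt10 (k n : ℕ) (hk : 2 ≤ k) (hn : 6 ≤ n) :
    w n k = w (n - 1) (k - 1) + w (n - 2) k := by
  obtain ⟨n, rfl⟩ : ∃ m, n = m + 2 := ⟨n - 2, by omega⟩
  obtain ⟨k, rfl⟩ : ∃ j, k = j + 1 := ⟨k - 1, by omega⟩
  simpa using w_add_two_add_one (n := n) (k := k) (by omega)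
end

section
/- For every m ≥ 1, the number of compositions of 2m-1 with all internal parts even is 2^m - 1, and the number of compositions of 2m with all internal parts even is 3·2^{m-1} - 1. -/
/-! Write `E n` for `evenInitCompositions n`, the compositions of `n` whose parts are all even
except possibly the last. Splitting off the first part, an internal-even composition of `n + 2`
is either `1 :: e` with `e ∈ E (n + 1)`, or an internal-even composition of `n + 1` with its first
part increased by 1. Likewise a member of `E (n + 3)` is `2 :: e` or `e` with its first part
increased by 2, for some `e ∈ E (n + 1)`. So `|E (2k + 1)| = |E (2k + 2)| = 2 ^ k`, and the two
counts follow by induction. -/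

theorem List.modifyHead_injective {α : Type*} {f : α → α} (hf : Function.Injective f) :
    Function.Injective (List.modifyHead f) := by
  rintro (_ | ⟨a, l⟩) (_ | ⟨b, m⟩) h <;> simp_all [hf.eq_iff]

theorem List.forall_mem_dropLast_cons {α : Type*} {p : α → Prop} {a : α} {l : List α} :
    (∀ x ∈ (a :: l).dropLast, p x) ↔ (l ≠ [] → p a) ∧ ∀ x ∈ l.dropLast, p x := by
  rcases l with _ | ⟨b, l⟩ <;> simp [List.dropLast_cons_cons]

theorem finite_setOf_isComposition (n : ℕ) : {l | IsComposition n l}.Finite :=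
  (Set.finite_range (Composition.blocks : Composition n → List ℕ)).subset
    fun l hl => ⟨⟨l, hl.1 _, hl.2⟩, rfl⟩

theorem isComposition_one_iff {l : List ℕ} : IsComposition 1 l ↔ l = [1] := by
  rcases l with _ | ⟨a, _ | ⟨b, l⟩⟩ <;> simp [IsComposition] <;> omega

theorem isComposition_two_iff {l : List ℕ} : IsComposition 2 l ↔ l = [2] ∨ l = [1, 1] := by
  rcases l with _ | ⟨a, _ | ⟨b, _ | ⟨c, l⟩⟩⟩ <;> simp [IsComposition] <;> omega

theorem ncard_image_cons_union_image_modifyHead (k : ℕ) {S T : Set (List ℕ)} (hS : S.Finite)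
    (hT : T.Finite) (hT_pos : ∀ l ∈ T, ∀ x ∈ l, 0 < x) :
    (List.cons k '' S ∪ List.modifyHead (· + k) '' T).ncard = S.ncard + T.ncard := by
  have hdisj : Disjoint (List.cons k '' S) (List.modifyHead (· + k) '' T) := by
    rw [Set.disjoint_left]
    rintro _ ⟨s, -, rfl⟩ ⟨_ | ⟨a, t⟩, ht, h⟩
    · simp at h
    · have := hT_pos _ ht a List.mem_cons_self
      simp only [List.modifyHead_cons, List.cons.injEq] at h
      omega
  rw [Set.ncard_union_eq hdisj (hS.image _) (hT.image _),
    Set.ncard_image_of_injective _ List.cons_injective,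
    Set.ncard_image_of_injective _ (List.modifyHead_injective (add_left_injective k))]

def evenInitCompositions (n : ℕ) : Set (List ℕ) :=
  {l | IsComposition n l ∧ ∀ x ∈ l.dropLast, Even x}

def internalEvenCompositions (n : ℕ) : Set (List ℕ) :=
  {l | IsComposition n l ∧ InternalEven l}

theorem evenInitCompositions_finite (n : ℕ) : (evenInitCompositions n).Finite :=
  (finite_setOf_isComposition n).subset fun _ hl => hl.1

theorem internalEvenCompositions_finite (n : ℕ) : (internalEvenCompositions n).Finite :=
  (finite_setOf_isComposition n).subset fun _ hl => hl.1

theorem evenInitCompositions_add_three (n : ℕ) :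
    evenInitCompositions (n + 3) =
      List.cons 2 '' evenInitCompositions (n + 1) ∪
        List.modifyHead (· + 2) '' evenInitCompositions (n + 1) := by
  ext l
  simp only [evenInitCompositions, IsComposition, Set.mem_union, Set.mem_image, Set.mem_ofPred_eq]
  constructor
  · rintro ⟨⟨hpos, hsum⟩, heven⟩
    rcases l with _ | ⟨a, r⟩
    · simp at hsum
    rw [List.forall_mem_dropLast_cons] at heven
    simp only [List.mem_cons, forall_eq_or_imp, List.sum_cons] at hpos hsum
    by_cases ha : a = 2
    · subst ha
      exact Or.inl ⟨r, ⟨⟨hpos.2, by omega⟩, heven.2⟩, rfl⟩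
    · have h3 : 3 ≤ a := by
        rcases eq_or_ne r [] with rfl | hr
        · simp at hsum; omega
        · obtain ⟨c, hc⟩ := heven.1 hr; omega
      refine Or.inr ⟨(a - 2) :: r, ⟨⟨?_, by simp; omega⟩, ?_⟩, by simp; omega⟩
      · simp only [List.mem_cons, forall_eq_or_imp]; exact ⟨by omega, hpos.2⟩
      · rw [List.forall_mem_dropLast_cons]
        refine ⟨fun hr => ?_, heven.2⟩
        obtain ⟨c, hc⟩ := heven.1 hr
        exact ⟨c - 1, by omega⟩
  · rintro (⟨r, ⟨⟨hpos, hsum⟩, heven⟩, rfl⟩ | ⟨_ | ⟨a, r⟩, ⟨⟨hpos, hsum⟩, heven⟩, rfl⟩)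
    · refine ⟨⟨?_, by simp; omega⟩, ?_⟩
      · simpa using hpos
      · rw [List.forall_mem_dropLast_cons]; exact ⟨fun _ => even_two, heven⟩
    · simp at hsum
    · simp only [List.mem_cons, forall_eq_or_imp, List.sum_cons] at hpos hsum
      rw [List.forall_mem_dropLast_cons] at heven
      refine ⟨⟨?_, by simp; omega⟩, ?_⟩
      · simp only [List.modifyHead_cons, List.mem_cons, forall_eq_or_imp]
        exact ⟨by omega, hpos.2⟩
      · rw [List.modifyHead_cons, List.forall_mem_dropLast_cons]
        exact ⟨fun hr => (heven.1 hr).add even_two, heven.2⟩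

theorem internalEven_cons_iff {a : ℕ} {l : List ℕ} :
    InternalEven (a :: l) ↔ ∀ x ∈ l.dropLast, Even x := Iff.rfl

theorem internalEvenCompositions_add_two (n : ℕ) :
    internalEvenCompositions (n + 2) =
      List.cons 1 '' evenInitCompositions (n + 1) ∪
        List.modifyHead (· + 1) '' internalEvenCompositions (n + 1) := by
  ext l
  simp only [internalEvenCompositions, evenInitCompositions, IsComposition, Set.mem_union,
    Set.mem_image, Set.mem_ofPred_eq]
  constructor
  · rintro ⟨⟨hpos, hsum⟩, heven⟩
    rcases l with _ | ⟨a, r⟩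
    · simp at hsum
    rw [internalEven_cons_iff] at heven
    simp only [List.mem_cons, forall_eq_or_imp, List.sum_cons] at hpos hsum
    by_cases ha : a = 1
    · subst ha
      exact Or.inl ⟨r, ⟨⟨hpos.2, by omega⟩, heven⟩, rfl⟩
    · refine Or.inr ⟨(a - 1) :: r, ⟨⟨?_, by simp; omega⟩, heven⟩, by simp; omega⟩
      simp only [List.mem_cons, forall_eq_or_imp]; exact ⟨by omega, hpos.2⟩
  · rintro (⟨r, ⟨⟨hpos, hsum⟩, heven⟩, rfl⟩ | ⟨_ | ⟨a, r⟩, ⟨⟨hpos, hsum⟩, heven⟩, rfl⟩)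
    · exact ⟨⟨by simpa using hpos, by simp; omega⟩, heven⟩
    · simp at hsum
    · simp only [List.mem_cons, forall_eq_or_imp, List.sum_cons] at hpos hsum
      refine ⟨⟨?_, by simp; omega⟩, heven⟩
      simp only [List.modifyHead_cons, List.mem_cons, forall_eq_or_imp]
      exact ⟨by omega, hpos.2⟩

theorem evenInitCompositions_one : evenInitCompositions 1 = {[1]} := by
  ext l
  simp only [evenInitCompositions, isComposition_one_iff, Set.mem_ofPred_eq,
    Set.mem_singleton_iff, and_iff_left_iff_imp]
  rintro rfl
  simp

theorem evenInitCompositions_two : evenInitCompositions 2 = {[2]} := by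
  ext l
  simp only [evenInitCompositions, isComposition_two_iff, Set.mem_ofPred_eq, Set.mem_singleton_iff]
  constructor
  · rintro ⟨rfl | rfl, h⟩
    · rfl
    · simp at h
  · rintro rfl
    simp

theorem internalEvenCompositions_one : internalEvenCompositions 1 = {[1]} := by
  ext l
  simp only [internalEvenCompositions, isComposition_one_iff, Set.mem_ofPred_eq,
    Set.mem_singleton_iff, and_iff_left_iff_imp]
  rintro rfl
  simp [InternalEven]

theorem ncard_evenInitCompositions_add_three (n : ℕ) :
    (evenInitCompositions (n + 3)).ncard = 2 * (evenInitCompositions (n + 1)).ncard := by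
  rw [evenInitCompositions_add_three, ncard_image_cons_union_image_modifyHead 2
    (evenInitCompositions_finite _) (evenInitCompositions_finite _) fun l hl => hl.1.1, two_mul]

theorem ncard_internalEvenCompositions_add_two (n : ℕ) :
    (internalEvenCompositions (n + 2)).ncard =
      (evenInitCompositions (n + 1)).ncard + (internalEvenCompositions (n + 1)).ncard := by
  rw [internalEvenCompositions_add_two, ncard_image_cons_union_image_modifyHead 1
    (evenInitCompositions_finite _) (internalEvenCompositions_finite _)
    fun l hl => hl.1.1]

theorem ncard_evenInitCompositions (k : ℕ) :
    (evenInitCompositions (2 * k + 1)).ncard = 2 ^ k ∧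
      (evenInitCompositions (2 * k + 2)).ncard = 2 ^ k := by
  induction k with
  | zero => simp [evenInitCompositions_one, evenInitCompositions_two]
  | succ k ih =>
    rw [show 2 * (k + 1) + 1 = 2 * k + 3 by ring, show 2 * (k + 1) + 2 = (2 * k + 1) + 3 by ring,
      ncard_evenInitCompositions_add_three, ncard_evenInitCompositions_add_three, ih.1, ih.2,
      pow_succ, mul_comm]
    exact ⟨rfl, rfl⟩

theorem ncard_internalEvenCompositions (k : ℕ) :
    (internalEvenCompositions (2 * k + 1)).ncard = 2 ^ (k + 1) - 1 ∧
      (internalEvenCompositions (2 * k + 2)).ncard = 3 * 2 ^ k - 1 := by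
  induction k with
  | zero => simp [internalEvenCompositions_one, ncard_internalEvenCompositions_add_two,
      evenInitCompositions_one]
  | succ k ih =>
    rw [show 2 * (k + 1) + 1 = 2 * k + 3 by ring, show 2 * (k + 1) + 2 = 2 * k + 4 by ring]
    have hodd : (internalEvenCompositions (2 * k + 3)).ncard = 2 ^ (k + 2) - 1 := by
      rw [ncard_internalEvenCompositions_add_two, (ncard_evenInitCompositions k).2, ih.2]
      have := Nat.one_le_two_pow (n := k)
      rw [pow_succ, pow_succ]
      omega
    refine ⟨hodd, ?_⟩
    rw [ncard_internalEvenCompositions_add_two, hodd, ncard_evenInitCompositions_add_three,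
      (ncard_evenInitCompositions k).1]
    have := Nat.one_le_two_pow (n := k)
    rw [pow_succ, pow_succ]
    omega

theorem stmt12 (m : ℕ) (hm : 1 ≤ m) :
    {l : List ℕ | IsComposition (2 * m - 1) l ∧ InternalEven l}.ncard = 2 ^ m - 1 ∧
    {l : List ℕ | IsComposition (2 * m) l ∧ InternalEven l}.ncard = 3 * 2 ^ (m - 1) - 1 := by
  obtain ⟨k, rfl⟩ : ∃ k, m = k + 1 := ⟨m - 1, by omega⟩
  rw [show 2 * (k + 1) - 1 = 2 * k + 1 by omega, show 2 * (k + 1) = 2 * k + 2 by ring,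
    Nat.add_sub_cancel]
  exact ncard_internalEvenCompositions k
end

section
/- ∑_{n≥0} d(n) q^n = (1 - q² + q³)/(1 - q - 2q² + 2q³) as formal power series, where d(n) = ∑_{k≥0} w(n-k,k). -/
/-- The power series variable, as a formal power series over ℚ. -/
noncomputable def q : PowerSeries ℚ := PowerSeries.X

/-!
Weight a composition `l` with parts in {1,2} by `q ^ (l.sum + waterCells l)`, so that `d n` is the
number of compositions of weight `n`. Removing the first part gives `A = 1 + q A + q² E` for the
generating function `A` of this weight, where `E` weighs the tails `l` of the compositions `2 :: l`:
behind a leading 2, the water cells are the parts 1 followed later by a 2. Removing the first part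
of such a tail, a leading 1 is a water cell iff the rest still contains a 2, and the tails without
a 2 contribute `1/(1-q)`; this gives `E (1 - 2q²) = 1 + q`, and eliminating `E` yields
`A (1 - q) (1 - 2q²) = 1 - q² + q³`.
-/

open PowerSeries

@[simp]
theorem parts12_cons {a : ℕ} {l : List ℕ} :
    Parts12 (a :: l) ↔ (a = 1 ∨ a = 2) ∧ Parts12 l := by
  simp [Parts12]

theorem finite_setOf_parts12_sum_le (n : ℕ) : {l | Parts12 l ∧ l.sum ≤ n}.Finite := by
  refine ((List.finite_length_le (Fin 3) n).image (List.map Fin.val)).subset ?_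
  rintro l ⟨hl, hsum⟩
  have hlen : l.length ≤ n := (List.length_le_sum_of_one_le l fun x hx => by
    rcases hl x hx with rfl | rfl <;> norm_num).trans hsum
  refine ⟨l.map (Fin.ofNat 3), by simpa using hlen, ?_⟩
  rw [List.map_map]
  refine (List.map_congr_left fun x hx => ?_).trans l.map_id
  rcases hl x hx with rfl | rfl <;> rfl

open Classical in
theorem ncard_setOf_fin_succ {n : ℕ} (p : Fin (n + 1) → Prop) :
    {i | p i}.ncard = (if p 0 then 1 else 0) + {i : Fin n | p i.succ}.ncard := by
  simp only [Set.ncard_eq_toFinset_card', Set.toFinset_ofPred, Fin.card_filter_univ_succ']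

theorem waterCells_cons (a : ℕ) (l : List ℕ) :
    waterCells (a :: l) = {i : Fin l.length | l.get i = 1 ∧
      (a = 2 ∨ ∃ j < i, l.get j = 2) ∧ ∃ j, i < j ∧ l.get j = 2}.ncard := by
  refine (ncard_setOf_fin_succ (n := l.length) _).trans ?_
  simp [Fin.exists_fin_succ, Fin.succ_lt_succ_iff]

@[simp]
theorem waterCells_nil : waterCells [] = 0 := by
  simp [waterCells]

theorem waterCells_one_cons (l : List ℕ) : waterCells (1 :: l) = waterCells l := by
  rw [waterCells_cons]
  simp [waterCells]

theorem waterCells_two_cons (l : List ℕ) :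
    waterCells (2 :: l) =
      {i : Fin l.length | l.get i = 1 ∧ ∃ j, i < j ∧ l.get j = 2}.ncard := by
  simp [waterCells_cons]

theorem waterCells_two_cons_cons (a : ℕ) (l : List ℕ) :
    waterCells (2 :: a :: l) = waterCells (2 :: l) + if a = 1 ∧ 2 ∈ l then 1 else 0 := by
  rw [waterCells_two_cons, waterCells_two_cons]
  refine (ncard_setOf_fin_succ (n := l.length) _).trans ?_
  simp [Fin.exists_fin_succ, Fin.succ_lt_succ_iff, List.mem_iff_get, add_comm]

theorem waterCells_two_cons_of_two_notMem {l : List ℕ} (h : 2 ∉ l) :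
    waterCells (2 :: l) = 0 := by
  rw [waterCells_two_cons, Set.ncard_eq_zero]
  ext i
  simp only [Set.mem_ofPred_eq, Set.mem_empty_iff_false, iff_false]
  rintro ⟨-, j, -, hj⟩
  exact h (hj ▸ l.get_mem j)

noncomputable def weightGF (P : List ℕ → Prop) (ψ : List ℕ → ℕ) : PowerSeries ℚ :=
  mk fun n => ({l | Parts12 l ∧ P l ∧ l.sum + ψ l = n}.ncard : ℚ)

theorem finite_setOf_parts12_sum_add_eq (P : List ℕ → Prop) (ψ : List ℕ → ℕ) (n : ℕ) :
    {l | Parts12 l ∧ P l ∧ l.sum + ψ l = n}.Finite :=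
  (finite_setOf_parts12_sum_le n).subset fun _ hl => ⟨hl.1, hl.2.2 ▸ Nat.le_add_right _ _⟩

open Classical in
theorem ncard_setOf_parts12_eq_add (Q : List ℕ → Prop)
    (hQ : {l | Parts12 l ∧ Q l}.Finite) :
    {l | Parts12 l ∧ Q l}.ncard = (if Q [] then 1 else 0) +
      {l | Parts12 l ∧ Q (1 :: l)}.ncard + {l | Parts12 l ∧ Q (2 :: l)}.ncard := by
  have hsplit : {l | Parts12 l ∧ Q l} = {l | l = [] ∧ Q []} ∪
      List.cons 1 '' {l | Parts12 l ∧ Q (1 :: l)} ∪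
      List.cons 2 '' {l | Parts12 l ∧ Q (2 :: l)} := by
    ext (_ | ⟨a, l⟩)
    · simp [Parts12]
    · simp only [Set.mem_ofPred_eq, parts12_cons, Set.mem_union, Set.mem_image, List.cons_ne_nil,
        false_and, false_or, List.cons.injEq]
      constructor
      · rintro ⟨⟨rfl | rfl, hl⟩, hQ⟩
        · exact Or.inl ⟨l, ⟨hl, hQ⟩, rfl, rfl⟩
        · exact Or.inr ⟨l, ⟨hl, hQ⟩, rfl, rfl⟩
      · rintro (⟨_, ⟨hl, hQ⟩, rfl, rfl⟩ | ⟨_, ⟨hl, hQ⟩, rfl, rfl⟩) <;> simp [hl, hQ]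
  rw [hsplit] at hQ ⊢
  obtain ⟨⟨hnil, h1⟩, h2⟩ := Set.finite_union.mp hQ |>.imp_left Set.finite_union.mp
  rw [Set.ncard_union_eq _ (hnil.union h1) h2, Set.ncard_union_eq _ hnil h1,
    Set.ncard_image_of_injective _ List.cons_injective,
    Set.ncard_image_of_injective _ List.cons_injective]
  · congr
    split_ifs with h <;> simp [h]
  all_goals
    rw [Set.disjoint_left]
    rintro _ (⟨rfl, -⟩ | ⟨l, -, rfl⟩) ⟨l', -, h⟩ <;> simp at h

theorem weightGF_add_const (P : List ℕ → Prop) (ψ : List ℕ → ℕ) (k : ℕ) :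
    weightGF P (fun l => ψ l + k) = X ^ k * weightGF P ψ := by
  ext n
  rw [weightGF, weightGF, coeff_X_pow_mul', coeff_mk, coeff_mk]
  split_ifs with h
  · congr 2
    ext l
    exact and_congr_right fun _ => and_congr_right fun _ => by omega
  · rw [Nat.cast_eq_zero, Set.ncard_eq_zero (finite_setOf_parts12_sum_add_eq _ _ _)]
    exact Set.eq_empty_of_forall_notMem fun l hl => h (by have := hl.2.2; omega)

theorem weightGF_add_one (P : List ℕ → Prop) (ψ : List ℕ → ℕ) :
    weightGF P (fun l => ψ l + 1) = X * weightGF P ψ := by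
  rw [weightGF_add_const, pow_one]

theorem weightGF_cons (P : List ℕ → Prop) (ψ : List ℕ → ℕ) [Decidable (P [])] :
    weightGF P ψ = (if P [] then X ^ ψ [] else 0) +
      X * weightGF (fun l => P (1 :: l)) (fun l => ψ (1 :: l)) +
      X ^ 2 * weightGF (fun l => P (2 :: l)) (fun l => ψ (2 :: l)) := by
  rw [← weightGF_add_one, ← weightGF_add_const]
  ext n
  simp only [weightGF, map_add, coeff_mk]
  rw [ncard_setOf_parts12_eq_add (fun l => P l ∧ l.sum + ψ l = n)
    (finite_setOf_parts12_sum_add_eq P ψ n)]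
  have hcons (a : ℕ) : {l | Parts12 l ∧ P (a :: l) ∧ (a :: l).sum + ψ (a :: l) = n} =
      {l | Parts12 l ∧ P (a :: l) ∧ l.sum + (ψ (a :: l) + a) = n} :=
    Set.ext fun l => and_congr_right fun _ => and_congr_right fun _ => by
      rw [List.sum_cons]
      omega
  rw [hcons, hcons, Nat.cast_add, Nat.cast_add]
  congr 2
  split_ifs <;> simp_all [coeff_X_pow, eq_comm]

theorem weightGF_congr {P : List ℕ → Prop} {ψ ψ' : List ℕ → ℕ} (h : ∀ l, P l → ψ l = ψ' l) :
    weightGF P ψ = weightGF P ψ' := by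
  ext n
  simp only [weightGF, coeff_mk]
  congr 2
  exact Set.ext fun l => and_congr_right fun _ => ⟨fun ⟨hP, hl⟩ => ⟨hP, h l hP ▸ hl⟩,
    fun ⟨hP, hl⟩ => ⟨hP, (h l hP).symm ▸ hl⟩⟩

theorem weightGF_false (ψ : List ℕ → ℕ) : weightGF (fun _ => False) ψ = 0 := by
  ext n
  simp [weightGF]

theorem weightGF_eq_and_add_and_not (P R : List ℕ → Prop) (ψ : List ℕ → ℕ) :
    weightGF P ψ = weightGF (fun l => P l ∧ R l) ψ + weightGF (fun l => P l ∧ ¬R l) ψ := by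
  ext n
  simp only [weightGF, coeff_mk, map_add]
  rw [← Set.ncard_inter_add_ncard_sdiff_eq_ncard _ {l | R l}
    (finite_setOf_parts12_sum_add_eq P ψ n), Nat.cast_add]
  congr 3 <;> ext l <;> simp only [Set.mem_inter_iff, Set.mem_sdiff, Set.mem_ofPred_eq] <;> tauto

theorem weightGF_two_notMem_mul : weightGF (fun l => 2 ∉ l) (fun _ => 0) * (1 - X) = 1 := by
  have h := weightGF_cons (fun l => 2 ∉ l) (fun _ => 0)
  simp only [List.not_mem_nil, not_false_eq_true, if_true, pow_zero, List.mem_cons,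
    OfNat.ofNat_ne_one, false_or, true_or, not_true_eq_false, weightGF_false] at h
  linear_combination h

theorem weightGF_waterCells_mul :
    weightGF (fun _ => True) waterCells * (1 - X) =
      1 + X ^ 2 * weightGF (fun _ => True) (fun l => waterCells (2 :: l)) := by
  have h := weightGF_cons (fun _ => True) waterCells
  simp only [waterCells_one_cons, waterCells_nil, if_true, pow_zero] at h
  linear_combination h

theorem weightGF_waterCells_two_cons_mul :
    weightGF (fun _ => True) (fun l => waterCells (2 :: l)) * (1 - 2 * X ^ 2) = 1 + X := by
  set E := weightGF (fun _ => True) (fun l => waterCells (2 :: l))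
  set E₂ := weightGF (fun l => 2 ∈ l) (fun l => waterCells (2 :: l))
  set G := weightGF (fun l => 2 ∉ l) (fun _ => 0)
  have hE : E = E₂ + G := by
    refine (weightGF_eq_and_add_and_not _ (fun l => 2 ∈ l) _).trans ?_
    simp only [true_and]
    congr 1
    exact weightGF_congr fun l hl => waterCells_two_cons_of_two_notMem hl
  have hM : weightGF (fun _ => True) (fun l => waterCells (2 :: l) + if 2 ∈ l then 1 else 0) =
      X * E₂ + G := by
    rw [weightGF_eq_and_add_and_not _ (fun l => 2 ∈ l), ← weightGF_add_one]
    simp only [true_and]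
    congr 1 <;> refine weightGF_congr fun l hl => ?_
    · simp [hl]
    · simp [hl, waterCells_two_cons_of_two_notMem]
  have hcons := weightGF_cons (fun _ => True) (fun l => waterCells (2 :: l))
  simp only [waterCells_two_cons_cons, waterCells_two_cons_of_two_notMem (List.not_mem_nil),
    if_true, pow_zero, true_and, OfNat.ofNat_ne_one, false_and, if_false, add_zero, hM] at hcons
  linear_combination hcons - X ^ 2 * hE + X * weightGF_two_notMem_mul

theorem d_eq_ncard (n : ℕ) : d n = {l | Parts12 l ∧ l.sum + waterCells l = n}.ncard := by
  classical
  have hS : {l | Parts12 l ∧ l.sum + waterCells l = n}.Finite := by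
    simpa using finite_setOf_parts12_sum_add_eq (fun _ => True) waterCells n
  rw [Set.ncard_eq_toFinset_card _ hS, Finset.card_eq_sum_card_fiberwise (f := waterCells)
    (t := Finset.range (n + 1)) fun l hl => ?_]
  · refine Finset.sum_congr rfl fun k hk => ?_
    rw [w, ← Set.ncard_coe_finset]
    congr 1
    ext l
    simp only [Finset.mem_range] at hk
    simp only [Finset.coe_filter, Set.Finite.mem_toFinset, Set.mem_ofPred_eq]
    constructor
    · rintro ⟨hl, hsum, rfl⟩
      exact ⟨⟨hl, by omega⟩, rfl⟩
    · rintro ⟨⟨hl, hsum⟩, rfl⟩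
      exact ⟨hl, by omega, rfl⟩
  · simp only [Finset.coe_range, Set.mem_Iio, Set.Finite.coe_toFinset,
      Set.mem_ofPred_eq] at hl ⊢
    omega

theorem stmt15 :
    PowerSeries.mk (fun n => (d n : ℚ)) =
      (1 - q ^ 2 + q ^ 3) * (1 - q - 2 * q ^ 2 + 2 * q ^ 3)⁻¹ := by
  have hd : PowerSeries.mk (fun n => (d n : ℚ)) = weightGF (fun _ => True) waterCells := by
    ext n
    simp [weightGF, d_eq_ncard]
  rw [PowerSeries.eq_mul_inv_iff_mul_eq (by simp [q]), hd, q]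
  linear_combination (1 - 2 * X ^ 2) * weightGF_waterCells_mul +
    X ^ 2 * weightGF_waterCells_two_cons_mul
end
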